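/- arXiv:math/0608270 — 6 statements merged into one kernel-verified Lean document; each statement's English description precedes it below -/
import Mathlib

section
/- If a voting system C on a set A of at least three alternatives satisfies unanimity and independence of irrelevant alternatives, then C satisfies neutrality: for every permutation ρ of A and every preference profile (P_1,...,P_n), C(ρ*P_1,...,ρ*P_n) = ρ*C(P_1,...,P_n). -/
variable {A I : Type*}

/-- A partial preorder: a reflexive and transitive binary relation. -/
def IsPPO (P : A → A → Prop) : Prop := Reflexive P ∧ Transitive P

/-- A linear (total) preorder: reflexive, transitive and complete. -/
def IsLPO (P : A → A → Prop) : Prop := Reflexive P ∧ Transitive P ∧ ∀ a b, P a b ∨ P b a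

/-- A profile of partial preorders. -/
def IsPPOProfile (P : I → A → A → Prop) : Prop := ∀ i, IsPPO (P i)

/-- A profile of linear (total) preorders. -/
def IsLPOProfile (P : I → A → A → Prop) : Prop := ∀ i, IsLPO (P i)

/-- Strict preference. -/
def StrictPref (P : A → A → Prop) (a b : A) : Prop := P a b ∧ ¬ P b a

/-- Indifference. -/
def Indiff (P : A → A → Prop) (a b : A) : Prop := P a b ∧ P b a

/-- The set `A` contains at least three distinct alternatives. -/
def ThreeAlts (A : Type*) : Prop := ∃ a b c : A, a ≠ b ∧ b ≠ c ∧ a ≠ c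

/-- Unanimity. -/
def Unanimity (C : (I → A → A → Prop) → A → A → Prop) : Prop :=
  ∀ P, IsPPOProfile P → ∀ a b : A, (∀ i, P i a b) → C P a b

/-- Independence of irrelevant alternatives. -/
def IIA (C : (I → A → A → Prop) → A → A → Prop) : Prop :=
  ∀ P P' : I → A → A → Prop, IsPPOProfile P → IsPPOProfile P' → ∀ a b : A,
    {i | P i a b} = {i | P' i a b} → {i | P i b a} = {i | P' i b a} →
    (C P a b ↔ C P' a b)

/-- Neutrality: `C (ρ*P) = ρ*(C P)` for every permutation `ρ` of the alternatives. -/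
def Neutrality (C : (I → A → A → Prop) → A → A → Prop) : Prop :=
  ∀ (ρ : Equiv.Perm A) (P : I → A → A → Prop), IsPPOProfile P →
    ∀ x y : A, C (fun i a b => P i (ρ.symm a) (ρ.symm b)) x y ↔ C P (ρ.symm x) (ρ.symm y)

/-- Monotonicity. -/
def Monotonicity (C : (I → A → A → Prop) → A → A → Prop) : Prop :=
  ∀ P P' : I → A → A → Prop, IsPPOProfile P → IsPPOProfile P' → ∀ a b : A,
    {i | P i a b} ⊆ {i | P' i a b} → {i | P' i b a} ⊆ {i | P i b a} →
    C P a b → C P' a b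

/-- `J` is a decisive set: unanimous strict preference on `J` forces weak aggregate preference. -/
def Decisive (C : (I → A → A → Prop) → A → A → Prop) (J : Set I) : Prop :=
  ∀ P, IsPPOProfile P → ∀ a b : A, (∀ j ∈ J, StrictPref (P j) a b) → C P a b

/-- `J` is a strongly decisive set: unanimous weak preference on `J` forces weak aggregate preference. -/
def SDecisive (C : (I → A → A → Prop) → A → A → Prop) (J : Set I) : Prop :=
  ∀ P, IsPPOProfile P → ∀ a b : A, (∀ j ∈ J, P j a b) → C P a b

/-!
By IIA, whether `a ≽ b` depends only on the pair of voter sets `{i | a ≽ᵢ b}`, `{i | b ≽ᵢ a}`.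
The point is that this dependence does not involve the pair `(a, b)` either. To move from `(a, b)`
to `(a, c)`, relabel `c` as `b` in the profile: every voter is then indifferent between `b` and `c`,
so by unanimity and transitivity `a ≽ b ↔ a ≽ c`, while IIA makes both sides agree with the
original and the target profile. Moving the first coordinate works the same way, and with a third
alternative any ordered pair of distinct alternatives can be reached from any other. Neutrality
follows, since `ρ*P` has on `(x, y)` the voter sets that `P` has on `(ρ⁻¹ x, ρ⁻¹ y)`.
-/

lemma ThreeAlts.exists_ne_ne (hA : ThreeAlts A) (a b : A) : ∃ e : A, e ≠ a ∧ e ≠ b := by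
  by_contra! h
  obtain ⟨x, y, z, hxy, hyz, hxz⟩ := hA
  have hx := h x
  have hy := h y
  have hz := h z
  by_cases x = a <;> by_cases y = a <;> by_cases z = a <;> simp_all

lemma IsPPOProfile.comp {B : Type*} {P : I → A → A → Prop} (hP : IsPPOProfile P) (f : B → A) :
    IsPPOProfile (fun i x y => P i (f x) (f y)) :=
  fun i => ⟨fun x => (hP i).1 (f x), fun _ _ _ hxy hyz => (hP i).2 hxy hyz⟩

lemma IIA.iff_of_forall {C : (I → A → A → Prop) → A → A → Prop} (hIIA : IIA C)
    {P P' : I → A → A → Prop} (hP : IsPPOProfile P) (hP' : IsPPOProfile P') {a b : A}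
    (hab : ∀ i, P i a b ↔ P' i a b) (hba : ∀ i, P i b a ↔ P' i b a) :
    C P a b ↔ C P' a b :=
  hIIA P P' hP hP' a b (Set.ext hab) (Set.ext hba)

section Clone

variable {C : (I → A → A → Prop) → A → A → Prop} {R : I → A → A → Prop} {a b c : A}

lemma iff_of_unanimous_indiff_right (hC : ∀ P, IsPPOProfile P → IsPPO (C P))
    (hU : Unanimity C) (hR : IsPPOProfile R) (hbc : ∀ i, R i b c) (hcb : ∀ i, R i c b) :
    C R a b ↔ C R a c :=
  ⟨fun h => (hC R hR).2 h (hU R hR b c hbc), fun h => (hC R hR).2 h (hU R hR c b hcb)⟩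

lemma iff_of_unanimous_indiff_left (hC : ∀ P, IsPPOProfile P → IsPPO (C P))
    (hU : Unanimity C) (hR : IsPPOProfile R) (hbc : ∀ i, R i b c) (hcb : ∀ i, R i c b) :
    C R b a ↔ C R c a :=
  ⟨fun h => (hC R hR).2 (hU R hR c b hcb) h, fun h => (hC R hR).2 (hU R hR b c hbc) h⟩

end Clone

def pairProfile (S T : Set I) (u v : A) : I → A → A → Prop :=
  fun i x y => x = y ∨ (x = u ∧ y = v ∧ i ∈ S) ∨ (x = v ∧ y = u ∧ i ∈ T)

section PairProfile

variable {S T : Set I} {u v : A}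

lemma isPPOProfile_pairProfile : IsPPOProfile (pairProfile S T u v) := by
  refine fun i => ⟨fun x => Or.inl rfl, ?_⟩
  rintro x y z (rfl | ⟨rfl, rfl, _⟩ | ⟨rfl, rfl, _⟩) (rfl | ⟨_, _, _⟩ | ⟨_, _, _⟩) <;>
    simp_all [pairProfile]

lemma pairProfile_apply_left (huv : u ≠ v) (i : I) : pairProfile S T u v i u v ↔ i ∈ S := by
  simp [pairProfile, huv, huv.symm]

lemma pairProfile_apply_right (huv : u ≠ v) (i : I) : pairProfile S T u v i v u ↔ i ∈ T := by
  simp [pairProfile, huv, huv.symm]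

variable {C : (I → A → A → Prop) → A → A → Prop}

lemma IIA.iff_pairProfile (hIIA : IIA C) {P : I → A → A → Prop} (hP : IsPPOProfile P) {a b : A}
    (hab : a ≠ b) : C P a b ↔ C (pairProfile {i | P i a b} {i | P i b a} a b) a b :=
  hIIA.iff_of_forall hP isPPOProfile_pairProfile
    (fun i => (pairProfile_apply_left (S := {i | P i a b}) (T := {i | P i b a}) hab i).symm)
    (fun i => (pairProfile_apply_right (S := {i | P i a b}) (T := {i | P i b a}) hab i).symm)

lemma pairProfile_iff_right (hC : ∀ P, IsPPOProfile P → IsPPO (C P)) (hU : Unanimity C)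
    (hIIA : IIA C) {a b c : A} (hab : a ≠ b) (hac : a ≠ c) (hbc : b ≠ c) :
    C (pairProfile S T a b) a b ↔ C (pairProfile S T a c) a c := by
  classical
  let R : I → A → A → Prop := fun i x y =>
    pairProfile S T a b i (Function.update id c b x) (Function.update id c b y)
  have hR : IsPPOProfile R := isPPOProfile_pairProfile.comp _
  calc C (pairProfile S T a b) a b ↔ C R a b :=
        hIIA.iff_of_forall isPPOProfile_pairProfile hR (by simp [R, hac, hbc])
          (by simp [R, hac, hbc])
    _ ↔ C R a c := iff_of_unanimous_indiff_right hC hU hR (by simp [R, hbc, pairProfile])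
          (by simp [R, hbc, pairProfile])
    _ ↔ C (pairProfile S T a c) a c :=
        hIIA.iff_of_forall hR isPPOProfile_pairProfile
          (by simp [R, hac, pairProfile_apply_left hab, pairProfile_apply_left hac])
          (by simp [R, hac, pairProfile_apply_right hab, pairProfile_apply_right hac])

lemma pairProfile_iff_left (hC : ∀ P, IsPPOProfile P → IsPPO (C P)) (hU : Unanimity C)
    (hIIA : IIA C) {a b c : A} (hab : a ≠ b) (hcb : c ≠ b) (hac : a ≠ c) :
    C (pairProfile S T a b) a b ↔ C (pairProfile S T c b) c b := by
  classical
  let R : I → A → A → Prop := fun i x y =>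
    pairProfile S T a b i (Function.update id c a x) (Function.update id c a y)
  have hR : IsPPOProfile R := isPPOProfile_pairProfile.comp _
  calc C (pairProfile S T a b) a b ↔ C R a b :=
        hIIA.iff_of_forall isPPOProfile_pairProfile hR (by simp [R, hac, hcb.symm])
          (by simp [R, hac, hcb.symm])
    _ ↔ C R c b := iff_of_unanimous_indiff_left hC hU hR (by simp [R, hac, pairProfile])
          (by simp [R, hac, pairProfile])
    _ ↔ C (pairProfile S T c b) c b :=
        hIIA.iff_of_forall hR isPPOProfile_pairProfile
          (by simp [R, hcb.symm, pairProfile_apply_left hab, pairProfile_apply_left hcb])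
          (by simp [R, hcb.symm, pairProfile_apply_right hab, pairProfile_apply_right hcb])

lemma pairProfile_iff_of_ne (hC : ∀ P, IsPPOProfile P → IsPPO (C P)) (hU : Unanimity C)
    (hIIA : IIA C) {a b c d : A} (hab : a ≠ b) (hcd : c ≠ d) (had : a ≠ d) :
    C (pairProfile S T a b) a b ↔ C (pairProfile S T c d) c d := by
  have h₁ : C (pairProfile S T a b) a b ↔ C (pairProfile S T a d) a d := by
    rcases eq_or_ne b d with rfl | hbd
    · rfl
    · exact pairProfile_iff_right hC hU hIIA hab had hbd
  have h₂ : C (pairProfile S T a d) a d ↔ C (pairProfile S T c d) c d := by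
    rcases eq_or_ne a c with rfl | hac
    · rfl
    · exact pairProfile_iff_left hC hU hIIA had hcd hac
  exact h₁.trans h₂

lemma pairProfile_iff (hA : ThreeAlts A) (hC : ∀ P, IsPPOProfile P → IsPPO (C P))
    (hU : Unanimity C) (hIIA : IIA C) {a b c d : A} (hab : a ≠ b) (hcd : c ≠ d) :
    C (pairProfile S T a b) a b ↔ C (pairProfile S T c d) c d := by
  rcases ne_or_eq a d with had | rfl
  · exact pairProfile_iff_of_ne hC hU hIIA hab hcd had
  · -- route through `(c, e)` with `e ∉ {a, c}`
    obtain ⟨e, hea, hec⟩ := hA.exists_ne_ne a c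
    exact (pairProfile_iff_of_ne hC hU hIIA hab hec.symm hea.symm).trans
      (pairProfile_iff_of_ne hC hU hIIA hec.symm hcd hcd)

end PairProfile

lemma iff_of_pattern_eq {C : (I → A → A → Prop) → A → A → Prop} (hA : ThreeAlts A)
    (hC : ∀ P, IsPPOProfile P → IsPPO (C P)) (hU : Unanimity C) (hIIA : IIA C)
    {P P' : I → A → A → Prop} (hP : IsPPOProfile P) (hP' : IsPPOProfile P') {a b c d : A}
    (hab : a ≠ b) (hcd : c ≠ d) (h₁ : {i | P i a b} = {i | P' i c d})
    (h₂ : {i | P i b a} = {i | P' i d c}) :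
    C P a b ↔ C P' c d := by
  rw [hIIA.iff_pairProfile hP hab, hIIA.iff_pairProfile hP' hcd, h₁, h₂]
  exact pairProfile_iff hA hC hU hIIA hab hcd

theorem arrovian_neutrality (C : (I → A → A → Prop) → A → A → Prop)
    (hA : ThreeAlts A)
    (hC : ∀ P, IsPPOProfile P → IsPPO (C P))
    (hU : Unanimity C) (hIIA : IIA C) :
    Neutrality C := by
  intro ρ P hP x y
  have hρP : IsPPOProfile (fun i a b => P i (ρ.symm a) (ρ.symm b)) := hP.comp ρ.symm
  rcases eq_or_ne x y with rfl | hxy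
  · exact iff_of_true ((hC _ hρP).1 x) ((hC P hP).1 _)
  · exact iff_of_pattern_eq hA hC hU hIIA hρP hP hxy (ρ.symm.injective.ne hxy) rfl rfl
end

section
/- Let C be an arrovian voting system on at least three alternatives. If J_1 and J_2 are decisive subsets of I, then their intersection J_1 ∩ J_2 is decisive. Consequently, for finite I the intersection of all decisive subsets is the unique minimal decisive subset. -/
variable {A I : Type*}

lemma aux_inter (C : (I → A → A → Prop) → A → A → Prop)
    (hA : ThreeAlts A)
    (hC : ∀ P, IsPPOProfile P → IsPPO (C P))
    (hIIA : IIA C) (J₁ J₂ : Set I) (h1 : Decisive C J₁) (h2 : Decisive C J₂) :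
    Decisive C (J₁ ∩ J₂) := by
  intro P hP a b hJ
  rcases eq_or_ne a b with rfl | hab'
  · exact (hC P hP).1 a
  obtain ⟨c, hca, hcb⟩ : ∃ c : A, c ≠ a ∧ c ≠ b := by
    obtain ⟨x, y, z, hxy, hyz, hxz⟩ := hA
    by_cases h1 : x ≠ a ∧ x ≠ b
    · exact ⟨x, h1.1, h1.2⟩
    by_cases h2 : y ≠ a ∧ y ≠ b
    · exact ⟨y, h2.1, h2.2⟩
    refine ⟨z, ?_, ?_⟩ <;> push_neg at h1 h2 <;> by_cases hx : x = a <;> by_cases hy : y = a <;>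
      simp_all <;> tauto
  have hac : a ≠ c := fun h => hca h.symm
  have hbc : b ≠ c := fun h => hcb h.symm
  have hba : b ≠ a := fun h => hab' h.symm
  set Q : I → A → A → Prop := fun i x y =>
    x = y ∨ x = a ∧ y = b ∧ P i a b ∨ x = b ∧ y = a ∧ P i b a ∨
    x = c ∧ y = b ∧ i ∈ J₁ ∧ (i ∈ J₂ → P i a b) ∨
    x = c ∧ y = a ∧ i ∈ J₁ ∧ P i b a ∨
    x = a ∧ y = c ∧ i ∈ J₂ ∨
    x = b ∧ y = c ∧ i ∈ J₂ ∧ P i b a with hQdef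
  have hQ : IsPPOProfile Q := by
    intro i
    constructor
    · intro x; exact Or.inl rfl
    · intro x y z hxy hyz
      simp only [hQdef] at hxy hyz ⊢
      rcases hxy with rfl | ⟨rfl, rfl, h⟩ | ⟨rfl, rfl, h⟩ | ⟨rfl, rfl, h, h'⟩ |
        ⟨rfl, rfl, h, h'⟩ | ⟨rfl, rfl, h⟩ | ⟨rfl, rfl, h, h'⟩ <;>
      · rcases hyz with rfl | ⟨e1, e2, hh⟩ | ⟨e1, e2, hh⟩ | ⟨e1, e2, hh, hh'⟩ |
          ⟨e1, e2, hh, hh'⟩ | ⟨e1, e2, hh⟩ | ⟨e1, e2, hh, hh'⟩ <;>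
        subst_vars <;> simp_all
  have hQab : {i | Q i a b} = {i | P i a b} := by
    ext i; simp only [hQdef, Set.mem_setOf_eq]; tauto
  have hQba : {i | Q i b a} = {i | P i b a} := by
    ext i; simp only [hQdef, Set.mem_setOf_eq]; tauto
  have hcb' : C Q c b := by
    refine h1 Q hQ c b fun j hj => ⟨?_, ?_⟩
    · exact Or.inr (Or.inr (Or.inr (Or.inl ⟨rfl, rfl, hj, fun h2j => (hJ j ⟨hj, h2j⟩).1⟩)))
    · intro hq
      have hnot : ¬ (j ∈ J₂ ∧ P j b a) := fun hh => (hJ j ⟨hj, hh.1⟩).2 hh.2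
      simp only [hQdef] at hq
      tauto
  have hac' : C Q a c := by
    refine h2 Q hQ a c fun j hj => ⟨?_, ?_⟩
    · exact Or.inr (Or.inr (Or.inr (Or.inr (Or.inr (Or.inl ⟨rfl, rfl, hj⟩)))))
    · intro hq
      have hnot : ¬ (j ∈ J₁ ∧ P j b a) := fun hh => (hJ j ⟨hh.1, hj⟩).2 hh.2
      simp only [hQdef] at hq
      tauto
  have hQab' : C Q a b := (hC Q hQ).2 hac' hcb'
  exact (hIIA Q P hQ hP a b hQab hQba).mp hQab'

lemma aux_univ (C : (I → A → A → Prop) → A → A → Prop) (hU : Unanimity C) :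
    Decisive C (Set.univ : Set I) :=
  fun P hP a b h => hU P hP a b fun i => (h i trivial).1

lemma aux_sInter (C : (I → A → A → Prop) → A → A → Prop)
    (hA : ThreeAlts A) (hC : ∀ P, IsPPOProfile P → IsPPO (C P))
    (hU : Unanimity C) (hIIA : IIA C)
    (S : Set (Set I)) (hS : S.Finite) (hmem : ∀ J ∈ S, Decisive C J) :
    Decisive C (⋂₀ S) := by
  revert hmem
  refine Set.Finite.induction_on
    (motive := fun s _ => (∀ J ∈ s, Decisive C J) → Decisive C (⋂₀ s)) S hS ?_ ?_
  · intro _; simpa using aux_univ C hU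
  · intro J S' _ _ ih hmem
    rw [Set.sInter_insert]
    exact aux_inter C hA hC hIIA _ _ (hmem J (Set.mem_insert _ _))
      (ih fun J' hJ' => hmem J' (Set.mem_insert_of_mem _ hJ'))

theorem decisive_intersection [Fintype I] (C : (I → A → A → Prop) → A → A → Prop)
    (hA : ThreeAlts A)
    (hC : ∀ P, IsPPOProfile P → IsPPO (C P))
    (hU : Unanimity C) (hIIA : IIA C) :
    (∀ J₁ J₂ : Set I, Decisive C J₁ → Decisive C J₂ → Decisive C (J₁ ∩ J₂)) ∧
    Decisive C (⋂₀ {J : Set I | Decisive C J}) ∧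
    (∃! K : Set I, Decisive C K ∧ ∀ K' : Set I, Decisive C K' → K ⊆ K') := by
  refine ⟨fun J₁ J₂ h1 h2 => aux_inter C hA hC hIIA J₁ J₂ h1 h2, ?_, ?_⟩
  · exact aux_sInter C hA hC hU hIIA _ (Set.toFinite _) fun J hJ => hJ
  · refine ⟨⋂₀ {J : Set I | Decisive C J},
      ⟨aux_sInter C hA hC hU hIIA _ (Set.toFinite _) fun J hJ => hJ,
       fun K' hK' => Set.sInter_subset_of_mem hK'⟩, ?_⟩
    rintro K ⟨hK, hmin⟩
    exact subset_antisymm (Set.subset_sInter fun J hJ => hmin J hJ)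
      (Set.sInter_subset_of_mem hK)
end

section
/- Let C be an arrovian voting system on at least three alternatives. If J_1 and J_2 are strongly decisive subsets of I, then their intersection J_1 ∩ J_2 is strongly decisive. -/
variable {A I : Type*}

/-!
Let `a ≽ b` for every voter of `J₁ ∩ J₂` and pick a third alternative `c`. Build a profile that
agrees with the given one on `{a, b}` and in which voter `i` ranks `a ≽ c` exactly when `i ∈ J₁`
and `c ≽ b` exactly when `i ∈ J₂`, closing under transitivity. This is consistent because the
only new path `a ≽ c ≽ b` runs through voters of `J₁ ∩ J₂`, who already have `a ≽ b`.
Strong decisiveness of `J₁` and `J₂` gives `a ≽ c ≽ b` in the aggregate, hence `a ≽ b`, and IIA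
carries this back to the original profile.
-/

open Relation

theorem exists_ne_ne_of_threeAlts (hA : ThreeAlts A) (a b : A) : ∃ c, c ≠ a ∧ c ≠ b := by
  obtain ⟨x, y, z, hxy, hyz, hxz⟩ := hA
  by_contra! h
  have two : ∀ c, c = a ∨ c = b := fun c => (em (c = a)).imp_right (h c)
  rcases two x with rfl | rfl <;> rcases two y with rfl | rfl <;> rcases two z with rfl | rfl <;>
    simp_all

theorem isPPO_reflTransGen (r : A → A → Prop) : IsPPO (ReflTransGen r) :=
  ⟨fun _ => ReflTransGen.refl, fun _ _ _ => ReflTransGen.trans⟩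

def detour (R : A → A → Prop) (a b c : A) (p q : Prop) (x y : A) : Prop :=
  (x = a ∧ y = b ∧ R a b) ∨ (x = b ∧ y = a ∧ R b a) ∨ (x = a ∧ y = c ∧ p) ∨ (x = c ∧ y = b ∧ q)

section detour

variable {R : A → A → Prop} {a b c : A} {p q : Prop}

theorem detour_to_mid (hp : p) : detour R a b c p q a c :=
  Or.inr <| Or.inr <| Or.inl ⟨rfl, rfl, hp⟩

theorem detour_from_mid (hq : q) : detour R a b c p q c b :=
  Or.inr <| Or.inr <| Or.inr ⟨rfl, rfl, hq⟩

theorem reflTransGen_detour_backward_iff (hab : a ≠ b) :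
    ReflTransGen (detour R a b c p q) b a ↔ R b a := by
  refine ⟨fun h => ?_, fun h => .single <| Or.inr <| Or.inl ⟨rfl, rfl, h⟩⟩
  suffices ∀ z, ReflTransGen (detour R a b c p q) b z → z = b ∨ R b a from
    (this a h).resolve_left hab
  intro z hz
  induction hz with
  | refl => exact .inl rfl
  | tail _ hyz ih =>
    rcases ih with rfl | hba
    · rcases hyz with ⟨rfl, -⟩ | ⟨-, rfl, hba⟩ | ⟨rfl, -⟩ | ⟨-, rfl, -⟩
      exacts [absurd rfl hab, .inr hba, absurd rfl hab, .inl rfl]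
    · exact .inr hba

theorem reflTransGen_detour_forward_iff (hab : a ≠ b) (hca : c ≠ a) (hcb : c ≠ b)
    (hpq : p → q → R a b) : ReflTransGen (detour R a b c p q) a b ↔ R a b := by
  refine ⟨fun h => ?_, fun h => .single <| Or.inl ⟨rfl, rfl, h⟩⟩
  suffices ∀ z, ReflTransGen (detour R a b c p q) a z → z = a ∨ (z = c ∧ p) ∨ R a b by
    rcases this b h with hba | ⟨hbc, -⟩ | hR
    exacts [absurd hba.symm hab, absurd hbc.symm hcb, hR]
  intro z hz
  induction hz with
  | refl => exact .inl rfl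
  | tail _ hyz ih =>
    rcases ih with rfl | ⟨rfl, hp⟩ | hR
    · rcases hyz with ⟨-, -, hR⟩ | ⟨rfl, -⟩ | ⟨-, rfl, hp⟩ | ⟨rfl, -⟩
      exacts [.inr (.inr hR), absurd rfl hab, .inr (.inl ⟨rfl, hp⟩), absurd rfl hca]
    · rcases hyz with ⟨rfl, -⟩ | ⟨rfl, -⟩ | ⟨rfl, -⟩ | ⟨-, -, hq⟩
      exacts [absurd rfl hca, absurd rfl hcb, absurd rfl hca, .inr (.inr (hpq hp hq))]
    · exact .inr (.inr hR)

end detour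

theorem strongly_decisive_intersection_general (C : (I → A → A → Prop) → A → A → Prop)
    (hA : ThreeAlts A)
    (hC : ∀ P, IsPPOProfile P → IsPPO (C P))
    (hIIA : IIA C) :
    ∀ J₁ J₂ : Set I, SDecisive C J₁ → SDecisive C J₂ → SDecisive C (J₁ ∩ J₂) := by
  intro J₁ J₂ hJ₁ hJ₂ P hP a b hJ
  rcases eq_or_ne a b with rfl | hab
  · exact (hC P hP).1 a
  obtain ⟨c, hca, hcb⟩ := exists_ne_ne_of_threeAlts hA a b
  let Q : I → A → A → Prop := fun i => ReflTransGen (detour (P i) a b c (i ∈ J₁) (i ∈ J₂))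
  have hQ : IsPPOProfile Q := fun i => isPPO_reflTransGen _
  have hac : C Q a c := hJ₁ Q hQ a c fun _ hj => .single (detour_to_mid hj)
  have hcb' : C Q c b := hJ₂ Q hQ c b fun _ hj => .single (detour_from_mid hj)
  refine (hIIA Q P hQ hP a b ?_ ?_).mp ((hC Q hQ).2 hac hcb')
  · ext i
    exact reflTransGen_detour_forward_iff hab hca hcb fun h₁ h₂ => hJ i ⟨h₁, h₂⟩
  · ext i
    exact reflTransGen_detour_backward_iff hab

theorem strongly_decisive_intersection [Fintype I] (C : (I → A → A → Prop) → A → A → Prop)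
    (hA : ThreeAlts A)
    (hC : ∀ P, IsPPOProfile P → IsPPO (C P))
    (hU : Unanimity C) (hIIA : IIA C) :
    ∀ J₁ J₂ : Set I, SDecisive C J₁ → SDecisive C J₂ → SDecisive C (J₁ ∩ J₂) :=
  strongly_decisive_intersection_general C hA hC hIIA
end

section
/- Let C be an arrovian voting system on at least three alternatives. If in some profile the aggregate ordering satisfies a ≽ b, then the supporting set K = {i ∈ I : a ≽_i b} is a decisive subset. -/
/-! If `a ≽ b` in `C P`, making `b ≽ c` unanimous and applying IIA shows that the supporters `K`
of `a ≽ b` decide `a ≽ c` in every profile where nobody ranks `c ≽ a`. This pairwise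
decisiveness spreads from `(u, v)` to `(u, w)` in the same way, and to `(w, v)` by the same
argument for the rule with all preferences reversed; with three alternatives it reaches every
pair. Finally, for `x ≻ y` on `K`, insert a third alternative `c` between `x` and `y` for the
voters of `K`: then `x ≽ c ≽ y` in the aggregate, and IIA gives `x ≽ y`. -/

variable {A I : Type*}

structure IsArrovian (C : (I → A → A → Prop) → A → A → Prop) : Prop where
  isPPO : ∀ P, IsPPOProfile P → IsPPO (C P)
  unanimity : Unanimity C
  iia : IIA C

def PairDecisive (C : (I → A → A → Prop) → A → A → Prop) (J : Set I) (u v : A) : Prop :=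
  ∀ Q, IsPPOProfile Q → (∀ j ∈ J, Q j u v) → (∀ i, ¬ Q i v u) → C Q u v

def dualRule (C : (I → A → A → Prop) → A → A → Prop) : (I → A → A → Prop) → A → A → Prop :=
  fun P => flip (C fun i => flip (P i))

def tripleRel (a b c : A) (pab pba pac pca pbc pcb : Prop) : A → A → Prop :=
  fun x y => x = y ∨ (x = a ∧ y = b ∧ pab) ∨ (x = b ∧ y = a ∧ pba) ∨
    (x = a ∧ y = c ∧ pac) ∨ (x = c ∧ y = a ∧ pca) ∨
    (x = b ∧ y = c ∧ pbc) ∨ (x = c ∧ y = b ∧ pcb)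

theorem ThreeAlts.exists_ne_ne_s5 (hA : ThreeAlts A) (u v : A) : ∃ w, w ≠ u ∧ w ≠ v := by
  obtain ⟨p, q, r, hpq, hqr, hpr⟩ := hA
  by_contra! h
  have hp := h p; have hq := h q; have hr := h r
  by_cases hpu : p = u <;> by_cases hqu : q = u <;> by_cases hru : r = u <;> simp_all

theorem IsPPO.flip {R : A → A → Prop} (hR : IsPPO R) : IsPPO (flip R) :=
  ⟨hR.1, fun _ _ _ hxy hyz => hR.2 hyz hxy⟩

section tripleRel

variable {a b c : A} {pab pba pac pca pbc pcb : Prop}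

theorem tripleRel_ab (hab : a ≠ b) (hac : a ≠ c) (hbc : b ≠ c) :
    tripleRel a b c pab pba pac pca pbc pcb a b ↔ pab := by
  unfold tripleRel; grind

theorem tripleRel_ba (hab : a ≠ b) (hac : a ≠ c) (hbc : b ≠ c) :
    tripleRel a b c pab pba pac pca pbc pcb b a ↔ pba := by
  unfold tripleRel; grind

theorem tripleRel_ac (hab : a ≠ b) (hac : a ≠ c) (hbc : b ≠ c) :
    tripleRel a b c pab pba pac pca pbc pcb a c ↔ pac := by
  unfold tripleRel; grind

theorem tripleRel_ca (hab : a ≠ b) (hac : a ≠ c) (hbc : b ≠ c) :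
    tripleRel a b c pab pba pac pca pbc pcb c a ↔ pca := by
  unfold tripleRel; grind

theorem tripleRel_bc (hab : a ≠ b) (hac : a ≠ c) (hbc : b ≠ c) :
    tripleRel a b c pab pba pac pca pbc pcb b c ↔ pbc := by
  unfold tripleRel; grind

theorem tripleRel_cb (hab : a ≠ b) (hac : a ≠ c) (hbc : b ≠ c) :
    tripleRel a b c pab pba pac pca pbc pcb c b ↔ pcb := by
  unfold tripleRel; grind

theorem isPPO_tripleRel
    (tabc : pab → pbc → pac) (tacb : pac → pcb → pab)
    (tbac : pba → pac → pbc) (tbca : pbc → pca → pba)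
    (tcab : pca → pab → pcb) (tcba : pcb → pba → pca) :
    IsPPO (tripleRel a b c pab pba pac pca pbc pcb) := by
  refine ⟨fun _ => Or.inl rfl, ?_⟩
  rintro x y z (rfl | hxy) hyz
  · exact hyz
  rcases hyz with rfl | hyz
  · exact Or.inr hxy
  rcases hxy with ⟨rfl, rfl, h1⟩ | ⟨rfl, rfl, h1⟩ | ⟨rfl, rfl, h1⟩ |
    ⟨rfl, rfl, h1⟩ | ⟨rfl, rfl, h1⟩ | ⟨rfl, rfl, h1⟩ <;>
  rcases hyz with ⟨h, rfl, h2⟩ | ⟨h, rfl, h2⟩ | ⟨h, rfl, h2⟩ |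
    ⟨h, rfl, h2⟩ | ⟨h, rfl, h2⟩ | ⟨h, rfl, h2⟩ <;>
  simp_all [tripleRel]

end tripleRel

variable {C : (I → A → A → Prop) → A → A → Prop} {J : Set I} {u v w : A}

theorem IsArrovian.dual (hC : IsArrovian C) : IsArrovian (dualRule C) where
  isPPO _ hP := (hC.isPPO _ fun i => (hP i).flip).flip
  unanimity _ hP a b h := hC.unanimity _ (fun i => (hP i).flip) b a h
  iia _ _ hP hP' a b hab hba :=
    hC.iia _ _ (fun i => (hP i).flip) (fun i => (hP' i).flip) b a hab hba

theorem pairDecisive_dualRule : PairDecisive (dualRule C) J v u ↔ PairDecisive C J u v :=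
  ⟨fun hD _ hQ hJ hvu => hD _ (fun i => (hQ i).flip) hJ hvu,
    fun hD _ hQ hJ hvu => hD _ (fun i => (hQ i).flip) hJ hvu⟩

theorem PairDecisive.exists_profile (hD : PairDecisive C J u v) (huv : u ≠ v) :
    ∃ P, IsPPOProfile P ∧ {i | P i u v} = J ∧ C P u v := by
  let P : I → A → A → Prop := fun i x y => x = y ∨ (x = u ∧ y = v ∧ i ∈ J)
  have hP : IsPPOProfile P := by
    refine fun i => ⟨fun _ => Or.inl rfl, ?_⟩
    rintro x y z (rfl | ⟨rfl, rfl, hi⟩) hyz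
    · exact hyz
    · rcases hyz with rfl | ⟨hvu, -, -⟩
      exacts [Or.inr ⟨rfl, rfl, hi⟩, absurd hvu.symm huv]
  have hPuv : {i | P i u v} = J := Set.ext fun i => by simp [P, huv]
  refine ⟨P, hP, hPuv, hD P hP (fun _ hj => Or.inr ⟨rfl, rfl, hj⟩) fun i hvu => ?_⟩
  simp [P, huv.symm] at hvu

/-- Make `v ≽ w` unanimous: transitivity of `C` chains `u ≽ v` to `u ≽ w`, and IIA transfers it. -/
theorem IsArrovian.pairDecisive_supporters (hC : IsArrovian C) (huv : u ≠ v) (huw : u ≠ w)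
    (hvw : v ≠ w) {P : I → A → A → Prop} (hP : IsPPOProfile P) (h : C P u v) :
    PairDecisive C {i | P i u v} u w := by
  intro Q hQ hJ hwu
  let R : I → A → A → Prop :=
    fun i => tripleRel u v w (P i u v) (P i v u) (Q i u w) (Q i w u) True False
  have hR : IsPPOProfile R := fun i =>
    isPPO_tripleRel (fun h _ => hJ i h) (fun _ h => h.elim)
      (fun _ _ => trivial) (fun _ h => (hwu i h).elim)
      (fun h _ => (hwu i h).elim) (fun h _ => h.elim)
  have hRuv : C R u v := (hC.iia P R hP hR u v
    (Set.ext fun _ => (tripleRel_ab huv huw hvw).symm)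
    (Set.ext fun _ => (tripleRel_ba huv huw hvw).symm)).mp h
  have hRvw : C R v w := hC.unanimity R hR v w fun _ => (tripleRel_bc huv huw hvw).mpr trivial
  exact (hC.iia R Q hR hQ u w (Set.ext fun _ => tripleRel_ac huv huw hvw)
    (Set.ext fun _ => tripleRel_ca huv huw hvw)).mp ((hC.isPPO R hR).2 hRuv hRvw)

theorem IsArrovian.pairDecisive_right (hC : IsArrovian C) (hD : PairDecisive C J u v)
    (huv : u ≠ v) (huw : u ≠ w) (hvw : v ≠ w) : PairDecisive C J u w := by
  obtain ⟨P, hP, rfl, hCP⟩ := hD.exists_profile huv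
  exact hC.pairDecisive_supporters huv huw hvw hP hCP

theorem IsArrovian.pairDecisive_left (hC : IsArrovian C) (hD : PairDecisive C J u v)
    (huv : u ≠ v) (hwu : w ≠ u) (hwv : w ≠ v) : PairDecisive C J w v :=
  pairDecisive_dualRule.mp <|
    hC.dual.pairDecisive_right (pairDecisive_dualRule.mpr hD) huv.symm hwv.symm hwu.symm

theorem IsArrovian.pairDecisive_swap (hC : IsArrovian C) (hD : PairDecisive C J u v)
    (huv : u ≠ v) (hwu : w ≠ u) (hwv : w ≠ v) : PairDecisive C J v u :=
  have hvw : PairDecisive C J v w :=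
    hC.pairDecisive_left (hC.pairDecisive_right hD huv hwu.symm hwv.symm) hwu.symm huv.symm
      hwv.symm
  hC.pairDecisive_right hvw hwv.symm huv.symm hwu

theorem IsArrovian.pairDecisive_of_ne (hC : IsArrovian C) (hA : ThreeAlts A)
    (hD : PairDecisive C J u v) (huv : u ≠ v) {x y : A} (hxy : x ≠ y) : PairDecisive C J x y := by
  obtain ⟨z, hxz, hDxz⟩ : ∃ z, x ≠ z ∧ PairDecisive C J x z := by
    by_cases hxu : x = u
    · exact ⟨v, hxu ▸ huv, hxu ▸ hD⟩
    by_cases hxv : x = v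
    · obtain ⟨w, hwu, hwv⟩ := hA.exists_ne_ne_s5 u v
      exact ⟨u, hxv ▸ huv.symm, hxv ▸ hC.pairDecisive_swap hD huv hwu hwv⟩
    exact ⟨v, hxv, hC.pairDecisive_left hD huv hxu hxv⟩
  by_cases hyz : y = z
  · exact hyz ▸ hDxz
  exact hC.pairDecisive_right hDxz hxz hxy fun h => hyz h.symm

/-- Insert `c` between `x` and `y` for the voters of `J` only, and chain `x ≽ c ≽ y`. -/
theorem IsArrovian.rel_of_pairDecisive (hC : IsArrovian C) {x y c : A}
    (hxc : PairDecisive C J x c) (hcy : PairDecisive C J c y)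
    (hxy : x ≠ y) (hcx : c ≠ x) (hcy' : c ≠ y) {Q : I → A → A → Prop} (hQ : IsPPOProfile Q)
    (hJ : ∀ j ∈ J, StrictPref (Q j) x y) : C Q x y := by
  let R : I → A → A → Prop :=
    fun i => tripleRel x y c (Q i x y) (Q i y x) (i ∈ J) False False (i ∈ J)
  have hR : IsPPOProfile R := fun i =>
    isPPO_tripleRel (fun _ h => h.elim) (fun h _ => (hJ i h).1)
      (fun hyx h => ((hJ i h).2 hyx).elim) (fun _ h => h.elim) (fun h _ => h.elim)
      (fun h hyx => ((hJ i h).2 hyx).elim)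
  have hRxc : C R x c := hxc R hR (fun _ h => (tripleRel_ac hxy hcx.symm hcy'.symm).mpr h)
    fun _ h => (tripleRel_ca hxy hcx.symm hcy'.symm).mp h
  have hRcy : C R c y := hcy R hR (fun _ h => (tripleRel_cb hxy hcx.symm hcy'.symm).mpr h)
    fun _ h => (tripleRel_bc hxy hcx.symm hcy'.symm).mp h
  exact (hC.iia R Q hR hQ x y (Set.ext fun _ => tripleRel_ab hxy hcx.symm hcy'.symm)
    (Set.ext fun _ => tripleRel_ba hxy hcx.symm hcy'.symm)).mp ((hC.isPPO R hR).2 hRxc hRcy)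

theorem IsArrovian.decisive_of_pairDecisive (hC : IsArrovian C) (hA : ThreeAlts A)
    (hD : PairDecisive C J u v) (huv : u ≠ v) : Decisive C J := by
  intro Q hQ x y hJ
  by_cases hxy : x = y
  · exact hxy ▸ (hC.isPPO Q hQ).1 x
  obtain ⟨c, hcx, hcy⟩ := hA.exists_ne_ne_s5 x y
  exact hC.rel_of_pairDecisive (hC.pairDecisive_of_ne hA hD huv hcx.symm)
    (hC.pairDecisive_of_ne hA hD huv hcy) hxy hcx hcy hQ hJ

theorem decisive_support_general (C : (I → A → A → Prop) → A → A → Prop)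
    (hA : ThreeAlts A)
    (hC : ∀ P, IsPPOProfile P → IsPPO (C P))
    (hU : Unanimity C) (hIIA : IIA C) :
    ∀ P : I → A → A → Prop, IsPPOProfile P → ∀ a b : A,
      C P a b → Decisive C {i | P i a b} := by
  intro P hP a b hCab
  have hArrow : IsArrovian C := ⟨hC, hU, hIIA⟩
  by_cases hab : a = b
  · subst hab
    exact fun Q hQ x y hJ => hU Q hQ x y fun i => (hJ i ((hP i).1 a)).1
  obtain ⟨c, hca, hcb⟩ := hA.exists_ne_ne_s5 a b
  exact hArrow.decisive_of_pairDecisive hA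
    (hArrow.pairDecisive_supporters hab hca.symm hcb.symm hP hCab) hca.symm

theorem decisive_support [Fintype I] (C : (I → A → A → Prop) → A → A → Prop)
    (hA : ThreeAlts A)
    (hC : ∀ P, IsPPOProfile P → IsPPO (C P))
    (hU : Unanimity C) (hIIA : IIA C) :
    ∀ P : I → A → A → Prop, IsPPOProfile P → ∀ a b : A,
      C P a b → Decisive C {i | P i a b} :=
  decisive_support_general C hA hC hU hIIA
end

section
/- Let C be an arrovian voting system on at least three alternatives and K ⊆ I a decisive set. Then the following are equivalent: (1) K is minimal among decisive sets; (2) K is contained in every decisive set; (3) every member k of K has veto power, i.e., for every profile, a ⋡_k b implies a ⋡ b in the aggregate. -/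
variable {A I : Type*}

/-! Decisiveness spreads along pairs of alternatives. Suppose `J` decides `a` over `b` whenever `J`
prefers `a` to `b` and everyone else finds them incomparable. In such a profile where moreover
everyone prefers `b` to a third alternative `c`, unanimity and transitivity of the aggregate give
`a` over `c`, and by IIA this settles the pair `(a, c)`; symmetrically for `(c, b)`. So `J`
decides every pair in this sense, and is then decisive. Applied to the supporters `{i | P i a b}`
of an aggregate preference `C P a b`, this makes them a decisive set. Hence decisive sets are
closed under intersection, so a minimal one is least, and every member of the least decisive set
has a veto. Conversely, a member of `K` outside a decisive `K'` is overruled in a profile where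
exactly `K'` ranks `a` above `b`. -/

lemma ThreeAlts.exists_ne_ne_s6 (hA : ThreeAlts A) (x y : A) : ∃ z, z ≠ x ∧ z ≠ y := by
  obtain ⟨a, b, c, hab, hbc, hac⟩ := hA
  by_contra! h
  rcases eq_or_ne a x with rfl | hax
  · exact hbc ((h b hab.symm).trans (h c hac.symm).symm)
  rcases eq_or_ne b x with rfl | hbx
  · exact hac ((h a hab).trans (h c hbc.symm).symm)
  exact hab ((h a hax).trans (h b hbx).symm)

section
variable {C : (I → A → A → Prop) → A → A → Prop}

/-- Unlike the classical notion, the voters outside `J` are not opposed to `a` over `b` but find the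
two incomparable. -/
def AlmostDecisive (C : (I → A → A → Prop) → A → A → Prop) (J : Set I) (a b : A) : Prop :=
  ∀ P, IsPPOProfile P → (∀ i, P i a b ↔ i ∈ J) → (∀ i, ¬ P i b a) → C P a b

lemma AlmostDecisive.of_profile (hIIA : IIA C) {J : Set I} {a b : A} {R : I → A → A → Prop}
    (hR : IsPPOProfile R) (hab : ∀ i, R i a b ↔ i ∈ J) (hba : ∀ i, ¬ R i b a)
    (hCR : C R a b) : AlmostDecisive C J a b := fun P hP hPab hPba =>
  (hIIA R P hR hP a b (Set.ext fun i => (hab i).trans (hPab i).symm)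
    (Set.ext fun i => iff_of_false (hba i) (hPba i))).mp hCR

lemma AlmostDecisive.change_right
    (hT : ∀ P, IsPPOProfile P → ∀ x y z, C P x y → C P y z → C P x z)
    (hU : Unanimity C) (hIIA : IIA C) {J : Set I} {a b c : A} (hab : a ≠ b) (hac : a ≠ c)
    (hF : AlmostDecisive C J a b) : AlmostDecisive C J a c := by
  rcases eq_or_ne c b with rfl | hcb
  · exact hF
  let R : I → A → A → Prop := fun i x y =>
    x = y ∨ (x = b ∧ y = c) ∨ (i ∈ J ∧ x = a ∧ (y = b ∨ y = c))
  have hR : IsPPOProfile R := fun i => ⟨fun _ => Or.inl rfl, fun x y z => by grind⟩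
  have hRab : C R a b := hF R hR (fun i => by grind) (fun i => by grind)
  have hRbc : C R b c := hU R hR b c fun i => Or.inr (Or.inl ⟨rfl, rfl⟩)
  exact .of_profile hIIA hR (fun i => by grind) (fun i => by grind) (hT R hR _ _ _ hRab hRbc)

lemma AlmostDecisive.change_left
    (hT : ∀ P, IsPPOProfile P → ∀ x y z, C P x y → C P y z → C P x z)
    (hU : Unanimity C) (hIIA : IIA C) {J : Set I} {a b c : A} (hab : a ≠ b) (hcb : c ≠ b)
    (hF : AlmostDecisive C J a b) : AlmostDecisive C J c b := by
  rcases eq_or_ne c a with rfl | hca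
  · exact hF
  let R : I → A → A → Prop := fun i x y =>
    x = y ∨ (x = c ∧ y = a) ∨ (i ∈ J ∧ (x = a ∨ x = c) ∧ y = b)
  have hR : IsPPOProfile R := fun i => ⟨fun _ => Or.inl rfl, fun x y z => by grind⟩
  have hRca : C R c a := hU R hR c a fun i => Or.inr (Or.inl ⟨rfl, rfl⟩)
  have hRab : C R a b := hF R hR (fun i => by grind) (fun i => by grind)
  exact .of_profile hIIA hR (fun i => by grind) (fun i => by grind) (hT R hR _ _ _ hRca hRab)

lemma AlmostDecisive.of_ne (hA : ThreeAlts A)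
    (hT : ∀ P, IsPPOProfile P → ∀ x y z, C P x y → C P y z → C P x z)
    (hU : Unanimity C) (hIIA : IIA C) {J : Set I} {a b x y : A} (hab : a ≠ b)
    (hF : AlmostDecisive C J a b) (hxy : x ≠ y) : AlmostDecisive C J x y := by
  obtain ⟨c, hca, hcx⟩ := hA.exists_ne_ne_s6 a x
  have hac : AlmostDecisive C J a c := hF.change_right hT hU hIIA hab hca.symm
  have hxc : AlmostDecisive C J x c := hac.change_left hT hU hIIA hca.symm hcx.symm
  exact hxc.change_right hT hU hIIA hcx.symm hxy

lemma Decisive.of_almostDecisive (hA : ThreeAlts A)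
    (hT : ∀ P, IsPPOProfile P → ∀ x y z, C P x y → C P y z → C P x z)
    (hU : Unanimity C) (hIIA : IIA C) {J : Set I} {a b : A} (hab : a ≠ b)
    (hF : AlmostDecisive C J a b) : Decisive C J := by
  intro Q hQ x y hJ
  simp only [StrictPref] at hJ
  rcases eq_or_ne x y with rfl | hxy
  · exact hU Q hQ x x fun i => (hQ i).1 x
  obtain ⟨z, hzx, hzy⟩ := hA.exists_ne_ne_s6 x y
  -- `J` is routed through `z`, while every voter keeps their `Q`-comparison of `x` and `y`.
  let R : I → A → A → Prop := fun i u v => u = v ∨ (i ∈ J ∧ (u = x ∧ v = z ∨ u = z ∧ v = y)) ∨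
    (Q i x y ∧ u = x ∧ v = y) ∨ (Q i y x ∧ u = y ∧ v = x)
  have hR : IsPPOProfile R := fun i => ⟨fun _ => Or.inl rfl, fun u v w => by
    have := hJ i; grind⟩
  have hRxz : C R x z :=
    hF.of_ne hA hT hU hIIA hab hzx.symm R hR (fun i => by grind) (fun i => by grind)
  have hRzy : C R z y :=
    hF.of_ne hA hT hU hIIA hab hzy R hR (fun i => by grind) (fun i => by grind)
  refine (hIIA R Q hR hQ x y ?_ ?_).mp (hT R hR _ _ _ hRxz hRzy)
  · ext i; have := hJ i; grind
  · ext i; grind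

lemma decisive_setOf_of_aggregate (hA : ThreeAlts A)
    (hT : ∀ P, IsPPOProfile P → ∀ x y z, C P x y → C P y z → C P x z)
    (hU : Unanimity C) (hIIA : IIA C) {P : I → A → A → Prop} (hP : IsPPOProfile P) {a b : A}
    (hCP : C P a b) : Decisive C {i | P i a b} := by
  rcases eq_or_ne a b with rfl | hab
  · exact fun Q hQ x y hJ => hU Q hQ x y fun i => (hJ i ((hP i).1 a)).1
  obtain ⟨c, hca, hcb⟩ := hA.exists_ne_ne_s6 a b
  let R : I → A → A → Prop := fun i x y => x = y ∨ (x = b ∧ y = c) ∨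
    (P i a b ∧ x = a ∧ (y = b ∨ y = c)) ∨ (P i b a ∧ x = b ∧ y = a)
  have hR : IsPPOProfile R := fun i => ⟨fun _ => Or.inl rfl, fun x y z => by grind⟩
  have hRab : C R a b := (hIIA P R hP hR a b (by ext; grind) (by ext; grind)).mp hCP
  have hRbc : C R b c := hU R hR b c fun i => Or.inr (Or.inl ⟨rfl, rfl⟩)
  have hac : AlmostDecisive C {i | P i a b} a c :=
    .of_profile hIIA hR (fun i => by grind) (fun i => by grind) (hT R hR _ _ _ hRab hRbc)
  exact .of_almostDecisive hA hT hU hIIA hca.symm hac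

lemma Decisive.inter (hA : ThreeAlts A)
    (hT : ∀ P, IsPPOProfile P → ∀ x y z, C P x y → C P y z → C P x z)
    (hU : Unanimity C) (hIIA : IIA C) {K K' : Set I} (hK : Decisive C K)
    (hK' : Decisive C K') : Decisive C (K ∩ K') := by
  obtain ⟨a, b, c, hab, hbc, hac⟩ := id hA
  let R : I → A → A → Prop := fun i x y => x = y ∨ (i ∈ K ∧ x = a ∧ y = b) ∨
    (i ∈ K' ∧ x = b ∧ y = c) ∨ (i ∈ K ∧ i ∈ K' ∧ x = a ∧ y = c)
  have hR : IsPPOProfile R := fun i => ⟨fun _ => Or.inl rfl, fun x y z => by grind⟩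
  have hRab : C R a b := hK R hR a b fun j hj => by unfold StrictPref; grind
  have hRbc : C R b c := hK' R hR b c fun j hj => by unfold StrictPref; grind
  have hKK' : {i | R i a c} = K ∩ K' := by ext; grind
  exact hKK' ▸ decisive_setOf_of_aggregate hA hT hU hIIA hR (hT R hR _ _ _ hRab hRbc)

lemma subset_of_veto {K K' : Set I} {a b : A} (hab : a ≠ b) (hK' : Decisive C K')
    (hveto : ∀ k ∈ K, ∀ P, IsPPOProfile P → ¬ P k a b → ¬ C P a b) : K ⊆ K' := by
  intro k hk
  by_contra hkK'
  let R : I → A → A → Prop := fun i x y => x = y ∨ (i ∈ K' ∧ x = a ∧ y = b)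
  have hR : IsPPOProfile R := fun i => ⟨fun _ => Or.inl rfl, fun x y z => by grind⟩
  exact hveto k hk R hR (by grind) (hK' R hR a b fun j hj => by unfold StrictPref; grind)

end

theorem minimal_decisive_tfae_general (C : (I → A → A → Prop) → A → A → Prop)
    (hA : ThreeAlts A)
    (hC : ∀ P, IsPPOProfile P → IsPPO (C P))
    (hU : Unanimity C) (hIIA : IIA C)
    (K : Set I) (hK : Decisive C K) :
    List.TFAE
      [ ∀ K' : Set I, K' ⊆ K → Decisive C K' → K' = K,
        ∀ K' : Set I, Decisive C K' → K ⊆ K',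
        ∀ k ∈ K, ∀ P : I → A → A → Prop, IsPPOProfile P →
          ∀ a b : A, ¬ P k a b → ¬ C P a b ] := by
  have hT : ∀ P, IsPPOProfile P → ∀ x y z, C P x y → C P y z → C P x z :=
    fun P hP _ _ _ => @(hC P hP).2 _ _ _
  tfae_have 1 → 2 := fun hmin K' hK' =>
    (hmin _ Set.inter_subset_left (hK.inter hA hT hU hIIA hK')).symm.subset.trans
      Set.inter_subset_right
  tfae_have 2 → 1 := fun hleast K' hK'K hK' => hK'K.antisymm (hleast K' hK')
  tfae_have 2 → 3 := fun hleast k hk P hP a b hPk hCP =>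
    hPk (hleast _ (decisive_setOf_of_aggregate hA hT hU hIIA hP hCP) hk)
  tfae_have 3 → 2 := fun hveto K' hK' => by
    obtain ⟨a, b, -, hab, -⟩ := hA
    exact subset_of_veto hab hK' fun k hk P hP => hveto k hk P hP a b
  tfae_finish

theorem minimal_decisive_tfae [Fintype I] (C : (I → A → A → Prop) → A → A → Prop)
    (hA : ThreeAlts A)
    (hC : ∀ P, IsPPOProfile P → IsPPO (C P))
    (hU : Unanimity C) (hIIA : IIA C)
    (K : Set I) (hK : Decisive C K) :
    List.TFAE
      [ ∀ K' : Set I, K' ⊆ K → Decisive C K' → K' = K,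
        ∀ K' : Set I, Decisive C K' → K ⊆ K',
        ∀ k ∈ K, ∀ P : I → A → A → Prop, IsPPOProfile P →
          ∀ a b : A, ¬ P k a b → ¬ C P a b ] :=
  minimal_decisive_tfae_general C hA hC hU hIIA K hK
end

section
/- Let Δ : 2^I → 2^I be a map satisfying N ⊆ ΔN for all N, and ΔM ⊆ ΔN whenever M ⊆ N. Define δN = ΔN \ N and define C_Δ : PPO_A^I → PPO_A by: a ≽ b iff there exists N ⊆ I such that a ≈_i b for all i ∈ N and a ≻_j b for all j ∈ δN. Then C_Δ(P_1,...,P_n) is a partial preorder for every profile (in particular, the defined relation is transitive), and C_Δ satisfies unanimity, neutrality, monotonicity, and independence of irrelevant alternatives. -/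
variable {A I : Type*}

/-- The voting system associated to a coalition structure `Δ : 2^I → 2^I`. -/
def CDelta (Δ : Set I → Set I) : (I → A → A → Prop) → A → A → Prop :=
  fun P a b => ∃ N : Set I, (∀ i ∈ N, Indiff (P i) a b) ∧
    ∀ j ∈ Δ N \ N, StrictPref (P j) a b

/-!
A voter outside `N` but inside `ΔN` is strict, a voter inside `N` is indifferent, so every voter of
`ΔN` weakly prefers `a` to `b`. For transitivity, witnesses `N` for `a ≽ b` and `M` for `b ≽ c`
combine into `N ∩ M`: by monotonicity of `Δ` a voter of `δ(N ∩ M)` lies in `ΔN ∩ ΔM`, so it weakly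
prefers along both steps and strictly along at least one. For monotonicity of `C_Δ`, the witness
`N` shrinks to the voters of `N` who are still indifferent in the new profile.
-/

section

variable {A I : Type*} {P : A → A → Prop} {a b c : A}

theorem Indiff.trans (hP : Transitive P) (hab : Indiff P a b) (hbc : Indiff P b c) :
    Indiff P a c :=
  ⟨hP hab.1 hbc.1, hP hbc.2 hab.2⟩

theorem strictPref_trans_of_or (hP : Transitive P) (hab : P a b) (hbc : P b c)
    (h : StrictPref P a b ∨ StrictPref P b c) : StrictPref P a c := by
  refine ⟨hP hab hbc, fun hca => ?_⟩
  rcases h with h | h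
  · exact h.2 (hP hbc hca)
  · exact h.2 (hP hca hab)

end

namespace CDelta

variable {A I : Type*} {Δ : Set I → Set I} {P P' : I → A → A → Prop} {a b : A}

theorem pref_of_mem {N : Set I} (hN : ∀ i ∈ N, Indiff (P i) a b)
    (hδN : ∀ j ∈ Δ N \ N, StrictPref (P j) a b) {j : I} (hj : j ∈ Δ N) : P j a b := by
  by_cases hjN : j ∈ N
  · exact (hN j hjN).1
  · exact (hδN j ⟨hj, hjN⟩).1

theorem refl (hP : ∀ i, Reflexive (P i)) : Reflexive (CDelta Δ P) := fun a =>
  ⟨Set.univ, fun i _ => ⟨hP i a, hP i a⟩, fun _ hj => absurd (Set.mem_univ _) hj.2⟩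

theorem trans (hΔ : Monotone Δ) (hP : ∀ i, Transitive (P i)) : Transitive (CDelta Δ P) := by
  rintro a b c ⟨N, hN, hδN⟩ ⟨M, hM, hδM⟩
  refine ⟨N ∩ M, fun i hi => (hN i hi.1).trans (hP i) (hM i hi.2), ?_⟩
  rintro j ⟨hj, hjNM⟩
  have hjN : j ∈ Δ N := hΔ Set.inter_subset_left hj
  have hjM : j ∈ Δ M := hΔ Set.inter_subset_right hj
  refine strictPref_trans_of_or (hP j) (pref_of_mem hN hδN hjN) (pref_of_mem hM hδM hjM) ?_
  by_cases hjN' : j ∈ N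
  · exact Or.inr (hδM j ⟨hjM, fun hjM' => hjNM ⟨hjN', hjM'⟩⟩)
  · exact Or.inl (hδN j ⟨hjN, hjN'⟩)

theorem isPPO (hΔ : Monotone Δ) (hP : IsPPOProfile P) : IsPPO (CDelta Δ P) :=
  ⟨refl fun i => (hP i).1, trans hΔ fun i => (hP i).2⟩

theorem of_forall (h : ∀ i, P i a b) : CDelta Δ P a b :=
  ⟨{i | P i b a}, fun i hi => ⟨h i, hi⟩, fun j hj => ⟨h j, hj.2⟩⟩

theorem mono (hΔ : Monotone Δ) (hab : ∀ i, P i a b → P' i a b) (hba : ∀ i, P' i b a → P i b a)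
    (h : CDelta Δ P a b) : CDelta Δ P' a b := by
  obtain ⟨N, hN, hδN⟩ := h
  refine ⟨N ∩ {i | P' i b a}, fun i hi => ⟨hab i (hN i hi.1).1, hi.2⟩, ?_⟩
  rintro j ⟨hj, hj_not_mem⟩
  have hjΔN : j ∈ Δ N := hΔ Set.inter_subset_left hj
  refine ⟨hab j (pref_of_mem hN hδN hjΔN), fun hjba => ?_⟩
  by_cases hjN : j ∈ N
  · exact hj_not_mem ⟨hjN, hjba⟩
  · exact (hδN j ⟨hjΔN, hjN⟩).2 (hba j hjba)

theorem congr (hab : ∀ i, P i a b ↔ P' i a b) (hba : ∀ i, P i b a ↔ P' i b a) :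
    CDelta Δ P a b ↔ CDelta Δ P' a b := by
  simp only [CDelta, Indiff, StrictPref, hab, hba]

end CDelta

theorem CDelta_arrovian_general (Δ : Set I → Set I)
    (h2 : ∀ M N : Set I, M ⊆ N → Δ M ⊆ Δ N) :
    (∀ P : I → A → A → Prop, IsPPOProfile P → IsPPO (CDelta Δ P)) ∧
    Unanimity (CDelta Δ (A := A)) ∧
    Neutrality (CDelta Δ (A := A)) ∧
    Monotonicity (CDelta Δ (A := A)) ∧
    IIA (CDelta Δ (A := A)) := by
  have hΔ : Monotone Δ := fun _ _ => h2 _ _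
  refine ⟨fun P hP => CDelta.isPPO hΔ hP, ?_, ?_, ?_, ?_⟩
  · exact fun P _ a b hab => CDelta.of_forall hab
  · exact fun _ _ _ _ _ => Iff.rfl
  · exact fun P P' _ _ a b hab hba => CDelta.mono hΔ (fun _ h => hab h) (fun _ h => hba h)
  · exact fun P P' _ _ a b hab hba => CDelta.congr (fun i => Set.ext_iff.mp hab i)
      (fun i => Set.ext_iff.mp hba i)

theorem CDelta_arrovian [Fintype I] (hA : ThreeAlts A) (Δ : Set I → Set I)
    (h1 : ∀ N : Set I, N ⊆ Δ N) (h2 : ∀ M N : Set I, M ⊆ N → Δ M ⊆ Δ N) :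
    (∀ P : I → A → A → Prop, IsPPOProfile P → IsPPO (CDelta Δ P)) ∧
    Unanimity (CDelta Δ (A := A)) ∧
    Neutrality (CDelta Δ (A := A)) ∧
    Monotonicity (CDelta Δ (A := A)) ∧
    IIA (CDelta Δ (A := A)) :=
  CDelta_arrovian_general Δ h2
end
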